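/- arXiv:1411.7234 — 2 statements merged into one kernel-verified Lean document; each statement's English description precedes it below -/
import Mathlib

section
/- In a cube complex of dimension at most n with the l∞ metric, there is a constant α > 0 (depending only on n) such that every taut m-string Σ satisfies l(Σ) ≥ αm − 1. -/
open scoped ENNReal

/-- A point of `ℝ^n` lying in the unit cube `[0,1]^n`. -/
def InUnitCube {n : ℕ} (x : Fin n → ℝ) : Prop := ∀ l, x l ∈ Set.Icc (0 : ℝ) 1

/-- A face of the cube `[0,1]^n` is encoded by `c : Fin n → Option Bool`:
`some b` freezes the coordinate at `0` or `1`, `none` leaves it free. -/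
def facePoints {n : ℕ} (c : Fin n → Option Bool) : Set (Fin n → ℝ) :=
  {x | ∀ l, (∀ b, c l = some b → x l = (if b then 1 else 0)) ∧
            (c l = none → x l ∈ Set.Icc (0 : ℝ) 1)}

/-- A cubical isometry between faces of cubes: a bijection of the free coordinates
together with possible reflections. Such maps are isometries for every `l_p`-norm. -/
def IsCubicalIso {n₁ n₂ : ℕ} (c₁ : Fin n₁ → Option Bool) (c₂ : Fin n₂ → Option Bool)
    (h : (Fin n₁ → ℝ) → (Fin n₂ → ℝ)) : Prop :=
  ∃ (σ : {l₂ : Fin n₂ // c₂ l₂ = none} → {l₁ : Fin n₁ // c₁ l₁ = none})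
    (fl : {l₂ : Fin n₂ // c₂ l₂ = none} → Bool),
    Function.Bijective σ ∧
    ∀ x ∈ facePoints c₁,
      (∀ l₂ b, c₂ l₂ = some b → h x l₂ = (if b then 1 else 0)) ∧
      (∀ (l₂ : Fin n₂) (hl : c₂ l₂ = none),
        h x l₂ = if fl ⟨l₂, hl⟩ then 1 - x (σ ⟨l₂, hl⟩).1 else x (σ ⟨l₂, hl⟩).1)

/-- A cube complex: a family of unit cubes glued along faces by cubical isometries.
The relation `rel` identifies points of the disjoint union of the cubes; it is an
equivalence relation on the points of the unit cubes, injective on each cube, and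
any two glued cubes are glued along a pair of faces via a cubical isometry. -/
structure CubeComplex where
  idx : Type
  dim : idx → ℕ
  rel : (Σ i : idx, Fin (dim i) → ℝ) → (Σ i : idx, Fin (dim i) → ℝ) → Prop
  rel_inCube : ∀ a b, rel a b → InUnitCube a.2 ∧ InUnitCube b.2
  rel_refl : ∀ a : Σ i : idx, Fin (dim i) → ℝ, InUnitCube a.2 → rel a a
  rel_symm : ∀ a b, rel a b → rel b a
  rel_trans : ∀ a b c, rel a b → rel b c → rel a c
  rel_inj : ∀ (i : idx) (x y : Fin (dim i) → ℝ), rel ⟨i, x⟩ ⟨i, y⟩ → x = y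
  rel_glue : ∀ i j : idx, (∃ x y, rel ⟨i, x⟩ ⟨j, y⟩) →
    ∃ (c₁ : Fin (dim i) → Option Bool) (c₂ : Fin (dim j) → Option Bool)
      (h : (Fin (dim i) → ℝ) → (Fin (dim j) → ℝ)),
      IsCubicalIso c₁ c₂ h ∧
      ∀ x y, InUnitCube x → InUnitCube y →
        (rel ⟨i, x⟩ ⟨j, y⟩ ↔ x ∈ facePoints c₁ ∧ h x = y)

namespace CubeComplex

variable (C : CubeComplex)

/-- The points of the cubes of the complex. -/
def PrePt : Type := {a : Σ i : C.idx, Fin (C.dim i) → ℝ // InUnitCube a.2}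

/-- The gluing equivalence relation as a setoid. -/
def setoid : Setoid C.PrePt :=
  ⟨fun a b => C.rel a.1 b.1,
    ⟨fun a => C.rel_refl a.1 a.2, fun h => C.rel_symm _ _ h,
      fun h h' => C.rel_trans _ _ _ h h'⟩⟩

/-- The geometric realization `|𝒞|` of the cube complex. -/
def Pts : Type := Quotient C.setoid

/-- The point of `|𝒞|` given by coordinates `x` in the cube `i`. -/
def pt (i : C.idx) (x : Fin (C.dim i) → ℝ) (hx : InUnitCube x) : C.Pts :=
  Quotient.mk C.setoid ⟨⟨i, x⟩, hx⟩

end CubeComplex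

/-- The `l_p` distance on `ℝ^n`, `p ∈ [1,∞]`. -/
noncomputable def lpDist (p : ℝ≥0∞) {n : ℕ} (x y : Fin n → ℝ) : ℝ :=
  if p = ∞ then ⨆ l, |x l - y l|
  else (∑ l, |x l - y l| ^ p.toReal) ^ (1 / p.toReal)

namespace CubeComplex

variable (C : CubeComplex)

/-- A string from `a` to `b` whose segments lie in cubes indexed in `A`: a chain of
pairs of points, each pair lying in a common cube, consecutive pairs matching up. -/
structure StringIn (A : Set C.idx) (a b : C.Pts) where
  m : ℕ
  cube : Fin m → C.idx
  s : ∀ k : Fin m, Fin (C.dim (cube k)) → ℝ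
  e : ∀ k : Fin m, Fin (C.dim (cube k)) → ℝ
  hs : ∀ k, InUnitCube (s k)
  he : ∀ k, InUnitCube (e k)
  hA : ∀ k, cube k ∈ A
  hnil : m = 0 → a = b
  hstart : ∀ h0 : 0 < m, C.pt (cube ⟨0, h0⟩) (s ⟨0, h0⟩) (hs ⟨0, h0⟩) = a
  hend : ∀ h0 : 0 < m,
    C.pt (cube ⟨m - 1, Nat.sub_lt h0 Nat.one_pos⟩) (e ⟨m - 1, Nat.sub_lt h0 Nat.one_pos⟩)
      (he ⟨m - 1, Nat.sub_lt h0 Nat.one_pos⟩) = b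
  hlink : ∀ (k : ℕ) (h1 : k + 1 < m),
    C.pt (cube ⟨k, Nat.lt_of_succ_lt h1⟩) (e ⟨k, Nat.lt_of_succ_lt h1⟩)
        (he ⟨k, Nat.lt_of_succ_lt h1⟩) =
      C.pt (cube ⟨k + 1, h1⟩) (s ⟨k + 1, h1⟩) (hs ⟨k + 1, h1⟩)

/-- The `l_p`-length of a string. -/
noncomputable def StringIn.length {C : CubeComplex} {A : Set C.idx} {a b : C.Pts}
    (p : ℝ≥0∞) (S : C.StringIn A a b) : ℝ :=
  ∑ k : Fin S.m, lpDist p (S.s k) (S.e k)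

/-- The induced length metric restricted to strings in the cubes indexed by `A`. -/
noncomputable def distIn (p : ℝ≥0∞) (A : Set C.idx) (a b : C.Pts) : ℝ :=
  sInf {r | ∃ S : C.StringIn A a b, S.length p = r}

/-- The induced length metric `d_p` on `|𝒞|`. -/
noncomputable def stringDist (p : ℝ≥0∞) (a b : C.Pts) : ℝ :=
  C.distIn p Set.univ a b

/-- The complex has dimension at most `n`. -/
def DimLE (n : ℕ) : Prop := ∀ i, C.dim i ≤ n

end CubeComplex

namespace CubeComplex

variable (C : CubeComplex)

/-- A taut `m`-string `(x₀,…,x_m)` in a cube complex with the `l_∞` metric on the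
cubes.  For each `k`, `s k` and `e k` are the coordinates of `x_k` and `x_{k+1}`
in the maximal cube `cube k` containing both.  The coordinates of consecutive
cubes are matched along their common face by `σ` (with the common face placed at
the origin, so unmatched "new" coordinates vanish at `x_{k+1}`).  Tautness:
(i) no cube contains three consecutive points, (ii) each `x_{k+1}` lies on a
shortest path from `x_k` to `x_{k+2}` inside the union of the two adjacent cubes,
and (iii) the coordinates are monotone along the string. -/
structure TautString (m : ℕ) where
  cube : Fin m → C.idx
  s : ∀ k : Fin m, Fin (C.dim (cube k)) → ℝ
  e : ∀ k : Fin m, Fin (C.dim (cube k)) → ℝ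
  hs : ∀ k, InUnitCube (s k)
  he : ∀ k, InUnitCube (e k)
  /-- consecutive segments match up in the realization -/
  hlink : ∀ (k : ℕ) (h1 : k + 1 < m),
    C.rel ⟨cube ⟨k, Nat.lt_of_succ_lt h1⟩, e ⟨k, Nat.lt_of_succ_lt h1⟩⟩
      ⟨cube ⟨k + 1, h1⟩, s ⟨k + 1, h1⟩⟩
  /-- each cube is a maximal cube containing its two points -/
  hmax : ∀ (k : Fin m) (j : C.idx) (u v : Fin (C.dim j) → ℝ),
    C.rel ⟨j, u⟩ ⟨cube k, s k⟩ → C.rel ⟨j, v⟩ ⟨cube k, e k⟩ →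
      C.dim j ≤ C.dim (cube k)
  /-- the coordinate matching along the common face of consecutive cubes -/
  σ : ∀ (k : ℕ) (h1 : k + 1 < m),
    Fin (C.dim (cube ⟨k + 1, h1⟩)) → Option (Fin (C.dim (cube ⟨k, Nat.lt_of_succ_lt h1⟩)))
  hσinj : ∀ (k : ℕ) (h1 : k + 1 < m) (l l' : Fin (C.dim (cube ⟨k + 1, h1⟩))) l₀,
    σ k h1 l = some l₀ → σ k h1 l' = some l₀ → l = l'
  /-- matched coordinates of `x_{k+1}` agree in both cubes; new coordinates are 0 -/
  hcoord : ∀ (k : ℕ) (h1 : k + 1 < m) (l : Fin (C.dim (cube ⟨k + 1, h1⟩))),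
    (σ k h1 l = none → s ⟨k + 1, h1⟩ l = 0) ∧
    ∀ l₀, σ k h1 l = some l₀ → s ⟨k + 1, h1⟩ l = e ⟨k, Nat.lt_of_succ_lt h1⟩ l₀
  /-- the face of the new cube where all new coordinates vanish is the glued face -/
  hface : ∀ (k : ℕ) (h1 : k + 1 < m) (x : Fin (C.dim (cube ⟨k + 1, h1⟩)) → ℝ),
    InUnitCube x → (∀ l, σ k h1 l = none → x l = 0) →
      ∃ x' : Fin (C.dim (cube ⟨k, Nat.lt_of_succ_lt h1⟩)) → ℝ, InUnitCube x' ∧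
        C.rel ⟨cube ⟨k, Nat.lt_of_succ_lt h1⟩, x'⟩ ⟨cube ⟨k + 1, h1⟩, x⟩ ∧
        ∀ l l₀, σ k h1 l = some l₀ → x' l₀ = x l
  /-- (iii) monotone coordinates -/
  hmono : ∀ (k : Fin m) (l : Fin (C.dim (cube k))), s k l ≤ e k l
  /-- (i) no cube contains three consecutive points of the string -/
  hno3 : ∀ (k : ℕ) (h1 : k + 1 < m),
    ¬ ∃ (j : C.idx) (u v w : Fin (C.dim j) → ℝ),
      C.rel ⟨j, u⟩ ⟨cube ⟨k, Nat.lt_of_succ_lt h1⟩, s ⟨k, Nat.lt_of_succ_lt h1⟩⟩ ∧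
      C.rel ⟨j, v⟩ ⟨cube ⟨k + 1, h1⟩, s ⟨k + 1, h1⟩⟩ ∧
      C.rel ⟨j, w⟩ ⟨cube ⟨k + 1, h1⟩, e ⟨k + 1, h1⟩⟩
  /-- (ii) `x_{k+1}` lies in the interval `I_{L}(x_k, x_{k+2})` for the length
  metric of `L`, the union of the two consecutive cubes -/
  hinterval : ∀ (k : ℕ) (h1 : k + 1 < m),
    C.distIn ⊤ {cube ⟨k, Nat.lt_of_succ_lt h1⟩, cube ⟨k + 1, h1⟩}
        (C.pt (cube ⟨k, Nat.lt_of_succ_lt h1⟩) (s ⟨k, Nat.lt_of_succ_lt h1⟩)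
          (hs ⟨k, Nat.lt_of_succ_lt h1⟩))
        (C.pt (cube ⟨k + 1, h1⟩) (s ⟨k + 1, h1⟩) (hs ⟨k + 1, h1⟩)) +
      C.distIn ⊤ {cube ⟨k, Nat.lt_of_succ_lt h1⟩, cube ⟨k + 1, h1⟩}
        (C.pt (cube ⟨k + 1, h1⟩) (s ⟨k + 1, h1⟩) (hs ⟨k + 1, h1⟩))
        (C.pt (cube ⟨k + 1, h1⟩) (e ⟨k + 1, h1⟩) (he ⟨k + 1, h1⟩)) =
    C.distIn ⊤ {cube ⟨k, Nat.lt_of_succ_lt h1⟩, cube ⟨k + 1, h1⟩}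
        (C.pt (cube ⟨k, Nat.lt_of_succ_lt h1⟩) (s ⟨k, Nat.lt_of_succ_lt h1⟩)
          (hs ⟨k, Nat.lt_of_succ_lt h1⟩))
        (C.pt (cube ⟨k + 1, h1⟩) (e ⟨k + 1, h1⟩) (he ⟨k + 1, h1⟩))

/-- The `l_∞`-length of a taut string. -/
noncomputable def TautString.length {C : CubeComplex} {m : ℕ} (T : C.TautString m) : ℝ :=
  ∑ k : Fin m, lpDist ⊤ (T.s k) (T.e k)

end CubeComplex

/-! Measure each point of a taut string by the sum `Φ` of the fractional parts of its coordinates.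
Across a gluing `Φ` cannot grow, since the coordinates of `x_{k+1}` in the next cube are some of
its coordinates in the previous cube together with new coordinates equal to `0`. Within a segment,
the increase of `Φ` plus the number of coordinates that reach `1` is the total increase of the
coordinates, at most `n` times the `l_∞`-length of the segment. Every segment but the last has a
coordinate reaching `1`: otherwise `x_k` would lie on the face glued to the next cube, and that cube
would contain three consecutive points. Summing up, `m - 1 ≤ n l(Σ) + n`, so `α = 1 / (n + 1)`
works. -/

open Finset

theorem sum_elim_comp_le_sum {ι ι' α : Type*} [Fintype ι] [Fintype ι'] [AddCommMonoid α]
    [PartialOrder α] [IsOrderedAddMonoid α] (σ : ι' → Option ι)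
    (hσ : ∀ a b c, σ a = some c → σ b = some c → a = b) (f : ι → α) (hf : ∀ i, 0 ≤ f i) :
    ∑ j, (σ j).elim 0 f ≤ ∑ i, f i := by
  classical
  set F : Option ι → α := fun o => o.elim 0 f
  have hinj : Set.InjOn σ {j | (σ j).isSome} := by
    intro a ha b _ hab
    obtain ⟨c, hc⟩ := Option.isSome_iff_exists.mp ha
    exact hσ a b c hc (hab ▸ hc)
  calc ∑ j, F (σ j) = ∑ j with (σ j).isSome, F (σ j) :=
        (sum_filter_of_ne fun j _ h => by cases hj : σ j <;> simp_all [F]).symm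
    _ = ∑ o ∈ image σ {j | (σ j).isSome}, F o := (sum_image (by simpa using hinj)).symm
    _ ≤ ∑ o, F o := sum_le_univ_sum_of_nonneg fun o => by cases o <;> simp [F, hf]
    _ = ∑ i, f i := by simp [Fintype.sum_option, F]

theorem Fin.sum_le_add_sum_of_succ_le {α : Type*} [AddCommMonoid α] [PartialOrder α]
    [IsOrderedAddMonoid α] {n : ℕ} {a b : Fin (n + 1) → α} (hb : ∀ k, 0 ≤ b k)
    (hab : ∀ k : Fin n, a k.succ ≤ b k.castSucc) : ∑ k, a k ≤ a 0 + ∑ k, b k := by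
  calc ∑ k, a k = a 0 + ∑ k : Fin n, a k.succ := Fin.sum_univ_succ a
    _ ≤ a 0 + ∑ k : Fin n, b k.castSucc := by gcongr with k; exact hab k
    _ ≤ a 0 + ∑ k, b k := by
      rw [Fin.sum_univ_castSucc b]
      exact add_le_add_right (le_add_of_nonneg_right (hb (Fin.last n))) _

theorem sum_sub_eq_sum_floor_sub_floor_add_fract {ι : Type*} [Fintype ι] (x y : ι → ℝ) :
    ∑ l, (y l - x l) =
      ∑ l, ((⌊y l⌋ : ℝ) - ⌊x l⌋) + ∑ l, Int.fract (y l) - ∑ l, Int.fract (x l) := by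
  simp only [← sum_add_distrib, ← sum_sub_distrib]
  refine sum_congr rfl fun l _ => ?_
  linarith [Int.floor_add_fract (y l), Int.floor_add_fract (x l)]

theorem sum_floor_sub_floor_nonneg {ι : Type*} [Fintype ι] {x y : ι → ℝ} (h : x ≤ y) :
    0 ≤ ∑ l, ((⌊y l⌋ : ℝ) - ⌊x l⌋) :=
  sum_nonneg fun l _ => sub_nonneg.2 (Int.cast_le.2 (Int.floor_mono (h l)))

theorem one_le_sum_floor_sub_floor {ι : Type*} [Fintype ι] {x y : ι → ℝ} (h : x ≤ y) {l : ι}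
    (hx : x l ∈ Set.Ico 0 1) (hy : y l = 1) : 1 ≤ ∑ l, ((⌊y l⌋ : ℝ) - ⌊x l⌋) := by
  have hl : (⌊y l⌋ : ℝ) - ⌊x l⌋ = 1 := by simp [hy, Int.floor_eq_zero_iff.2 hx]
  exact hl.symm.le.trans (single_le_sum (f := fun l => (⌊y l⌋ : ℝ) - ⌊x l⌋)
    (fun l _ => sub_nonneg.2 (Int.cast_le.2 (Int.floor_mono (h l)))) (mem_univ l))

theorem lpDist_top_nonneg {d : ℕ} (x y : Fin d → ℝ) : 0 ≤ lpDist ⊤ x y := by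
  rw [lpDist, if_pos rfl]
  exact Real.iSup_nonneg fun l => abs_nonneg _

theorem abs_sub_le_lpDist_top {d : ℕ} (x y : Fin d → ℝ) (l : Fin d) :
    |x l - y l| ≤ lpDist ⊤ x y := by
  rw [lpDist, if_pos rfl]
  exact le_ciSup (f := fun l => |x l - y l|) (Set.finite_range _).bddAbove l

theorem sum_sub_le_mul_lpDist_top {d : ℕ} (x y : Fin d → ℝ) :
    ∑ l, (y l - x l) ≤ d * lpDist ⊤ x y := by
  calc ∑ l, (y l - x l) ≤ ∑ _l : Fin d, lpDist ⊤ x y :=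
        sum_le_sum fun l _ => by linarith [neg_abs_le (x l - y l), abs_sub_le_lpDist_top x y l]
    _ = d * lpDist ⊤ x y := by simp

theorem exists_lt_one_eq_one_of_notMem_facePoints {n : ℕ} {c : Fin n → Option Bool}
    {x y : Fin n → ℝ} (hx : InUnitCube x) (hxy : x ≤ y) (hy : y ∈ facePoints c)
    (hx' : x ∉ facePoints c) : ∃ l, x l < 1 ∧ y l = 1 := by
  by_contra! hne
  refine hx' fun l => ⟨fun b hb => ?_, fun _ => hx l⟩
  have hyb := (hy l).1 b hb
  have hxyl := hxy l
  have hxl := hx l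
  cases b <;> simp only [Bool.false_eq_true, if_true, if_false] at hyb ⊢
  · linarith [hxl.1]
  · exact le_antisymm hxl.2 (not_lt.mp fun h => hne l h hyb)

theorem IsCubicalIso.inUnitCube_apply {n₁ n₂ : ℕ} {c₁ : Fin n₁ → Option Bool}
    {c₂ : Fin n₂ → Option Bool} {h : (Fin n₁ → ℝ) → (Fin n₂ → ℝ)} (hh : IsCubicalIso c₁ c₂ h)
    {x : Fin n₁ → ℝ} (hx : x ∈ facePoints c₁) : InUnitCube (h x) := by
  obtain ⟨σ, fl, -, hmap⟩ := hh
  intro l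
  cases hl : c₂ l with
  | some b => rw [(hmap x hx).1 l b hl]; cases b <;> simp
  | none =>
    have hxσ := (hx (σ ⟨l, hl⟩).1).2 (σ ⟨l, hl⟩).2
    rw [(hmap x hx).2 l hl]
    split <;> constructor <;> linarith [hxσ.1, hxσ.2]

namespace CubeComplex.TautString

variable {C : CubeComplex} {m : ℕ} (T : C.TautString m)

theorem exists_s_lt_one_and_e_eq_one (k : ℕ) (h1 : k + 1 < m) :
    ∃ l, T.s ⟨k, Nat.lt_of_succ_lt h1⟩ l < 1 ∧ T.e ⟨k, Nat.lt_of_succ_lt h1⟩ l = 1 := by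
  obtain ⟨c₁, c₂, h, hh, hglue⟩ := C.rel_glue _ _ ⟨_, _, T.hlink k h1⟩
  have he := ((hglue _ _ (T.he _) (T.hs _)).1 (T.hlink k h1)).1
  refine exists_lt_one_eq_one_of_notMem_facePoints (T.hs _) (T.hmono _) he fun hs => ?_
  have hrel := (hglue _ _ (T.hs _) (hh.inUnitCube_apply hs)).2 ⟨hs, rfl⟩
  exact T.hno3 k h1 ⟨_, _, _, _, C.rel_symm _ _ hrel, C.rel_refl _ (T.hs _),
    C.rel_refl _ (T.he _)⟩

theorem sum_fract_s_succ_le (k : ℕ) (h1 : k + 1 < m) :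
    ∑ l, Int.fract (T.s ⟨k + 1, h1⟩ l) ≤ ∑ l, Int.fract (T.e ⟨k, Nat.lt_of_succ_lt h1⟩ l) := by
  calc ∑ l, Int.fract (T.s ⟨k + 1, h1⟩ l)
      = ∑ l, (T.σ k h1 l).elim 0 fun l₀ => Int.fract (T.e ⟨k, Nat.lt_of_succ_lt h1⟩ l₀) := by
        refine sum_congr rfl fun l _ => ?_
        cases hl : T.σ k h1 l with
        | none => simp [(T.hcoord k h1 l).1 hl]
        | some l₀ => simp [(T.hcoord k h1 l).2 l₀ hl]
    _ ≤ _ := sum_elim_comp_le_sum _ (T.hσinj k h1) _ fun _ => Int.fract_nonneg _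

theorem length_nonneg : 0 ≤ T.length :=
  sum_nonneg fun _ _ => lpDist_top_nonneg _ _

theorem natCast_le_mul_length_add {n M : ℕ} (hC : C.DimLE n) (T : C.TautString (M + 1)) :
    (M : ℝ) ≤ n * T.length + n := by
  set δ : Fin (M + 1) → ℝ := fun k => lpDist ⊤ (T.s k) (T.e k)
  set Φs : Fin (M + 1) → ℝ := fun k => ∑ l, Int.fract (T.s k l)
  set Φe : Fin (M + 1) → ℝ := fun k => ∑ l, Int.fract (T.e k l)
  set c : Fin (M + 1) → ℝ := fun k => ∑ l, ((⌊T.e k l⌋ : ℝ) - ⌊T.s k l⌋)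
  have hc : ∀ k, 0 ≤ c k := fun k => sum_floor_sub_floor_nonneg (T.hmono k)
  have hc_one : ∀ k : Fin M, 1 ≤ c k.castSucc := by
    intro k
    obtain ⟨l, hs, he⟩ : ∃ l, T.s k.castSucc l < 1 ∧ T.e k.castSucc l = 1 :=
      T.exists_s_lt_one_and_e_eq_one k (by omega)
    exact one_le_sum_floor_sub_floor (T.hmono _) ⟨(T.hs _ l).1, hs⟩ he
  have hseg : ∀ k, c k ≤ n * δ k + Φs k - Φe k := by
    intro k
    have hδ : (C.dim (T.cube k) : ℝ) * δ k ≤ n * δ k :=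
      mul_le_mul_of_nonneg_right (by exact_mod_cast hC _) (lpDist_top_nonneg _ _)
    linarith [sum_sub_eq_sum_floor_sub_floor_add_fract (T.s k) (T.e k),
      sum_sub_le_mul_lpDist_top (T.s k) (T.e k)]
  have hΦs : Φs 0 ≤ n := calc
    Φs 0 ≤ ∑ _l : Fin (C.dim (T.cube 0)), (1 : ℝ) := sum_le_sum fun l _ => (Int.fract_lt_one _).le
    _ ≤ n := by simpa using hC _
  have hchain : ∑ k, Φs k ≤ Φs 0 + ∑ k, Φe k :=
    Fin.sum_le_add_sum_of_succ_le (fun k => sum_nonneg fun l _ => Int.fract_nonneg _)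
      fun k => T.sum_fract_s_succ_le k (by omega)
  calc (M : ℝ) = ∑ k : Fin M, (1 : ℝ) := by simp
    _ ≤ ∑ k : Fin M, c k.castSucc := sum_le_sum fun k _ => hc_one k
    _ ≤ ∑ k, c k := by rw [Fin.sum_univ_castSucc c]; linarith [hc (Fin.last M)]
    _ ≤ ∑ k, (n * δ k + Φs k - Φe k) := sum_le_sum fun k _ => hseg k
    _ = n * T.length + (∑ k, Φs k - ∑ k, Φe k) := by
      simp only [sum_sub_distrib, sum_add_distrib, ← mul_sum]
      rw [length]; ring
    _ ≤ n * T.length + n := by linarith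

end CubeComplex.TautString

/-- For each `n` there is a constant `α > 0` such that in every cube complex of
dimension at most `n` with the `l_∞` metric, every taut `m`-string `Σ` satisfies
`l(Σ) ≥ α m - 1`. -/
theorem tautString_length_lower_bound (n : ℕ) :
    ∃ α : ℝ, 0 < α ∧ ∀ (C : CubeComplex), C.DimLE n →
      ∀ (m : ℕ) (T : C.TautString m), α * m - 1 ≤ T.length := by
  refine ⟨1 / (n + 1), by positivity, fun C hC m T => ?_⟩
  have hL := T.length_nonneg
  have hm : (m : ℝ) ≤ (n + 1) * (T.length + 1) := by
    cases m with
    | zero => simp only [CharP.cast_eq_zero]; positivity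
    | succ M => push_cast; linarith [T.natCast_le_mul_length_add hC]
  rw [sub_le_iff_le_add, div_mul_eq_mul_div, div_le_iff₀ (by positivity)]
  linarith
end

section
/- If a cube complex admits a regular decomposition of length m (i.e., it is collapsible in m steps), then its set of hyperplanes is m-colorable: there is a map Φ from hyperplanes to {1,…,m} with Φ(𝔥) ≠ Φ(𝔥') whenever 𝔥 and 𝔥' intersect. -/
/-- The metric interval between two vertices of a graph (with the path metric). -/
def gInterval {V : Type} (G : SimpleGraph V) (x y : V) : Set V :=
  {w | G.dist x w + G.dist w y = G.dist x y}

/-- A vertex set is convex if it contains all metric intervals between its points. -/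
def GConvex {V : Type} (G : SimpleGraph V) (H : Set V) : Prop :=
  ∀ x ∈ H, ∀ y ∈ H, gInterval G x y ⊆ H

/-- A graph is median if it is connected and every triple of vertices has a unique
median, i.e. a unique vertex lying in all three pairwise metric intervals. -/
def IsMedianGraph {V : Type} (G : SimpleGraph V) : Prop :=
  G.Connected ∧ ∀ x y z : V,
    ∃! w, w ∈ gInterval G x y ∧ w ∈ gInterval G y z ∧ w ∈ gInterval G x z

/-- A vertex set is a halfspace if it and its complement are nonempty and convex. -/
def IsHalfspace {V : Type} (G : SimpleGraph V) (H : Set V) : Prop :=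
  H.Nonempty ∧ Hᶜ.Nonempty ∧ GConvex G H ∧ GConvex G Hᶜ

/-- The 1-skeleton of `𝒞 ∪ ⋃ᵢ (ℒᵢ × [0,1])`: for each `j` a new copy of the
subcomplex `L j` is added, with each new vertex joined to its base vertex. -/
def glueGraph {V : Type} (G : SimpleGraph V) {J : Type} (L : J → Set V) :
    SimpleGraph (V ⊕ Σ j : J, ↥(L j)) :=
  SimpleGraph.fromRel (fun a b =>
    match a, b with
    | .inl a, .inl b => G.Adj a b
    | .inl a, .inr b => a = ↑b.2
    | .inr _, .inl _ => False
    | .inr a, .inr b => a.1 = b.1 ∧ G.Adj ↑a.2 ↑b.2)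

/-- Two halfspaces cross (equivalently, the corresponding hyperplanes intersect)
if all four corner intersections are nonempty. -/
def Crossing {V : Type} (H K : Set V) : Prop :=
  (H ∩ K).Nonempty ∧ (H ∩ Kᶜ).Nonempty ∧ (Hᶜ ∩ K).Nonempty ∧ (Hᶜ ∩ Kᶜ).Nonempty

/-- Collapsibility (of the underlying graph of a cube complex) in `m` steps:
starting from a single point, each step glues a family of products of connected
subcomplexes with an interval. -/
inductive Collapsible : ∀ {V : Type}, SimpleGraph V → ℕ → Prop
  | point {V : Type} (G : SimpleGraph V) (v : V) (hv : ∀ w, w = v) : Collapsible G 0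
  | glue {V : Type} {G : SimpleGraph V} {m : ℕ} (hG : Collapsible G m)
      {J : Type} (L : J → Set V)
      (hL : ∀ j, (L j).Nonempty ∧ (G.induce (L j)).Connected)
      {V' : Type} (G' : SimpleGraph V') (e : G' ≃g glueGraph G L) :
      Collapsible G' (m + 1)

/-!
Induction along the decomposition. Let `H` be a halfspace of the glued graph. If its trace on the
base is a proper nonempty subset, that trace is a halfspace of the base, and two such halfspaces
cross only if their traces do; so they inherit the colouring of the base. Otherwise, up to
complement, `H` misses the base; convexity of `H` puts it inside one new copy of some `L j`, and
convexity of `Hᶜ` with connectedness of `L j` makes it that whole copy. Two such halfspaces are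
equal or disjoint, so the new hyperplanes never cross and all receive the one new colour.
The distances needed for these convexity arguments are bounded below by mapping the glued graph
to the box product of the base with a star.
-/

open SimpleGraph

namespace SimpleGraph

variable {V V' : Type*} {G : SimpleGraph V} {G' : SimpleGraph V'}

lemma Hom.edist_le (f : G →g G') (u v : V) : G'.edist (f u) (f v) ≤ G.edist u v := by
  by_cases h : G.Reachable u v
  · obtain ⟨p, hp⟩ := h.exists_walk_length_eq_edist
    rw [← hp, ← p.length_map f]
    exact SimpleGraph.edist_le _
  · rw [edist_eq_top_of_not_reachable h]
    exact le_top

lemma Hom.dist_le (f : G →g G') {u v : V} (h : G.Reachable u v) :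
    G'.dist (f u) (f v) ≤ G.dist u v := by
  have := f.edist_le u v
  rw [← h.coe_dist_eq_edist, ← (h.map f).coe_dist_eq_edist] at this
  exact_mod_cast this

lemma Iso.dist_eq (e : G ≃g G') (u v : V) : G'.dist (e u) (e v) = G.dist u v := by
  have h : G'.edist (e u) (e v) = G.edist u v :=
    le_antisymm (e.toHom.edist_le u v) (by simpa using e.symm.toHom.edist_le (e u) (e v))
  rw [dist, dist, h]

end SimpleGraph

lemma mem_gInterval_of_le {V : Type} {G : SimpleGraph V} (hG : G.Connected) {x y w : V}
    (h : G.dist x w + G.dist w y ≤ G.dist x y) : w ∈ gInterval G x y :=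
  le_antisymm h hG.dist_triangle

lemma GConvex.preimage_iso {V V' : Type} {G : SimpleGraph V} {G' : SimpleGraph V'}
    (e : G ≃g G') {H : Set V'} (h : GConvex G' H) : GConvex G (e ⁻¹' H) := by
  intro x hx y hy w hw
  apply h _ hx _ hy
  simpa only [gInterval, Set.mem_ofPred_eq, e.dist_eq] using hw

lemma IsHalfspace.preimage_iso {V V' : Type} {G : SimpleGraph V} {G' : SimpleGraph V'}
    (e : G ≃g G') {H : Set V'} (h : IsHalfspace G' H) : IsHalfspace G (e ⁻¹' H) :=
  ⟨h.1.preimage e.surjective, h.2.1.preimage e.surjective, h.2.2.1.preimage_iso e,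
    h.2.2.2.preimage_iso e⟩

lemma IsHalfspace.compl {V : Type} {G : SimpleGraph V} {H : Set V} (h : IsHalfspace G H) :
    IsHalfspace G Hᶜ := by
  obtain ⟨h₁, h₂, h₃, h₄⟩ := h
  exact ⟨h₂, by rwa [compl_compl], h₄, by rwa [compl_compl]⟩

lemma isHalfspace_compl_iff {V : Type} {G : SimpleGraph V} {H : Set V} :
    IsHalfspace G Hᶜ ↔ IsHalfspace G H :=
  ⟨fun h => compl_compl H ▸ h.compl, IsHalfspace.compl⟩

lemma IsHalfspace.not_subsingleton {V : Type} {G : SimpleGraph V} {H : Set V}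
    (h : IsHalfspace G H) : ¬ Subsingleton V := by
  obtain ⟨⟨x, hx⟩, ⟨y, hy⟩, -⟩ := h
  exact fun _ => hy (Subsingleton.elim x y ▸ hx)

section Crossing

variable {V V' : Type} {H K : Set V}

lemma Crossing.compl_left (h : Crossing H K) : Crossing Hᶜ K := by
  obtain ⟨h₁, h₂, h₃, h₄⟩ := h
  exact ⟨h₃, h₄, by rwa [compl_compl], by rwa [compl_compl]⟩

lemma Crossing.compl_right (h : Crossing H K) : Crossing H Kᶜ := by
  obtain ⟨h₁, h₂, h₃, h₄⟩ := h
  exact ⟨h₂, by rwa [compl_compl], h₄, by rwa [compl_compl]⟩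

lemma Crossing.preimage {f : V' → V} (hf : f.Surjective) (h : Crossing H K) :
    Crossing (f ⁻¹' H) (f ⁻¹' K) :=
  ⟨h.1.preimage hf, h.2.1.preimage hf, h.2.2.1.preimage hf, h.2.2.2.preimage hf⟩

end Crossing

/-- A hyperplane is encoded by its two halfspaces `H` and `Hᶜ`, which get the same colour. -/
def IsHyperplaneColoring {V : Type} (G : SimpleGraph V) (m : ℕ) (Φ : Set V → ℕ) : Prop :=
  (∀ H, IsHalfspace G H → Φ H < m ∧ Φ Hᶜ = Φ H) ∧
    ∀ H K, IsHalfspace G H → IsHalfspace G K → Crossing H K → Φ H ≠ Φ K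

lemma IsHyperplaneColoring.of_subsingleton {V : Type} [Subsingleton V] (G : SimpleGraph V)
    (m : ℕ) (Φ : Set V → ℕ) : IsHyperplaneColoring G m Φ :=
  ⟨fun _ h => absurd ‹_› h.not_subsingleton, fun _ _ h => absurd ‹_› h.not_subsingleton⟩

lemma IsHyperplaneColoring.comp_preimage_iso {V V' : Type} {G : SimpleGraph V}
    {G' : SimpleGraph V'} {m : ℕ} {Φ : Set V → ℕ} (hΦ : IsHyperplaneColoring G m Φ)
    (e : G ≃g G') : IsHyperplaneColoring G' m (fun H => Φ (e ⁻¹' H)) :=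
  ⟨fun _ hH => hΦ.1 _ (hH.preimage_iso e),
    fun _ _ hH hK hHK => hΦ.2 _ _ (hH.preimage_iso e) (hK.preimage_iso e)
      (hHK.preimage e.surjective)⟩

section Glue

variable {V : Type} {G : SimpleGraph V} {J : Type} {L : J → Set V}

@[simp]
lemma glueGraph_adj_inl_inl {x y : V} :
    (glueGraph G L).Adj (.inl x) (.inl y) ↔ G.Adj x y := by
  simp only [glueGraph, fromRel_adj]
  exact ⟨fun h => h.2.elim id fun h => h.symm, fun h => ⟨by simp [h.ne], .inl h⟩⟩

@[simp]
lemma glueGraph_adj_inl_inr {x : V} {b : Σ j, L j} :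
    (glueGraph G L).Adj (.inl x) (.inr b) ↔ x = b.2 := by
  simp [glueGraph]

@[simp]
lemma glueGraph_adj_inr_inl {x : V} {b : Σ j, L j} :
    (glueGraph G L).Adj (.inr b) (.inl x) ↔ x = b.2 := by
  rw [adj_comm, glueGraph_adj_inl_inr]

@[simp]
lemma glueGraph_adj_inr_inr {a b : Σ j, L j} :
    (glueGraph G L).Adj (.inr a) (.inr b) ↔ a.1 = b.1 ∧ G.Adj a.2 b.2 := by
  simp only [glueGraph, fromRel_adj, ne_eq, Sum.inr.injEq]
  refine ⟨fun h => h.2.elim id fun h => ⟨h.1.symm, h.2.symm⟩, fun h => ⟨?_, .inl h⟩⟩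
  rintro rfl
  exact h.2.ne rfl

variable (G L) in
def glueGraph.inlHom : G →g glueGraph G L where
  toFun := Sum.inl
  map_rel' := glueGraph_adj_inl_inl.mpr

lemma connected_glueGraph (hG : G.Connected) : (glueGraph G L).Connected := by
  obtain ⟨x₀⟩ := hG.nonempty
  refine (connected_iff_exists_forall_reachable _).mpr ⟨.inl x₀, ?_⟩
  rintro (x | b)
  · exact (hG x₀ x).map (glueGraph.inlHom G L)
  · exact ((hG x₀ b.2).map (glueGraph.inlHom G L)).trans
      (Adj.reachable (glueGraph_adj_inl_inr.mpr rfl))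

variable (G L) in
def glueGraph.toBoxProdStar : glueGraph G L →g G □ starGraph (none : Option J) where
  toFun := Sum.elim (fun x => (x, none)) (fun b => (b.2, some b.1))
  map_rel' := by
    rintro (x | ⟨j, x⟩) (y | ⟨j', y⟩) h <;> simp_all [boxProd_adj, starGraph_adj]

@[simp]
lemma glueGraph.toBoxProdStar_inl (x : V) : glueGraph.toBoxProdStar G L (.inl x) = (x, none) :=
  rfl

@[simp]
lemma glueGraph.toBoxProdStar_inr (b : Σ j, L j) :
    glueGraph.toBoxProdStar G L (.inr b) = ((b.2 : V), some b.1) :=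
  rfl

namespace glueGraph

lemma dist_add_dist_le (hG : G.Connected) (u v : V ⊕ Σ j, L j) :
    G.dist (toBoxProdStar G L u).1 (toBoxProdStar G L v).1 +
      (starGraph none).dist (toBoxProdStar G L u).2 (toBoxProdStar G L v).2 ≤
      (glueGraph G L).dist u v := by
  have h := (toBoxProdStar G L).edist_le u v
  rw [edist_boxProd, ← (hG _ _).coe_dist_eq_edist,
    ← (connected_starGraph _ _ _).coe_dist_eq_edist,
    ← (connected_glueGraph hG _ _).coe_dist_eq_edist] at h
  exact_mod_cast h

lemma dist_inl_inl (hG : G.Connected) (x y : V) :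
    (glueGraph G L).dist (.inl x) (.inl y) = G.dist x y := by
  refine le_antisymm ((inlHom G L).dist_le (hG x y)) ?_
  simpa using dist_add_dist_le (L := L) hG (.inl x) (.inl y)

lemma dist_inr_inl_ge (hG : G.Connected) (b : Σ j, L j) (y : V) :
    G.dist b.2 y + 1 ≤ (glueGraph G L).dist (.inr b) (.inl y) := by
  have h : (starGraph none).dist (some b.1) none = 1 :=
    dist_eq_one_iff_adj.mpr (by simp [starGraph_adj])
  simpa [h] using dist_add_dist_le hG (.inr b) (.inl y)

lemma dist_inr_inr_ge (hG : G.Connected) {a b : Σ j, L j} (hab : a.1 ≠ b.1) :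
    G.dist a.2 b.2 + 2 ≤ (glueGraph G L).dist (.inr a) (.inr b) := by
  have h : 1 < (starGraph none).dist (some a.1) (some b.1) :=
    (connected_starGraph _ _ _).one_lt_dist_of_ne_of_not_adj (by simpa using hab)
      (by simp [starGraph_adj])
  have := dist_add_dist_le hG (.inr a) (.inr b)
  simp only [toBoxProdStar_inr] at this
  omega

lemma dist_inl_inr_self (b : Σ j, L j) : (glueGraph G L).dist (.inl b.2) (.inr b) = 1 :=
  dist_eq_one_iff_adj.mpr (glueGraph_adj_inl_inr.mpr rfl)

lemma dist_inr_inl_self (b : Σ j, L j) : (glueGraph G L).dist (.inr b) (.inl b.2) = 1 := by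
  rw [dist_comm, dist_inl_inr_self]

lemma inl_mem_gInterval_inl_inl (hG : G.Connected) {x y w : V} (hw : w ∈ gInterval G x y) :
    (.inl w : V ⊕ Σ j, L j) ∈ gInterval (glueGraph G L) (.inl x) (.inl y) := by
  simpa only [gInterval, Set.mem_ofPred_eq, dist_inl_inl hG] using hw

lemma inl_mem_gInterval_inr_inl (hG : G.Connected) (b : Σ j, L j) (y : V) :
    .inl (b.2 : V) ∈ gInterval (glueGraph G L) (.inr b) (.inl y) := by
  refine mem_gInterval_of_le (connected_glueGraph hG) ?_
  rw [dist_inr_inl_self, dist_inl_inl hG, add_comm]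
  exact dist_inr_inl_ge hG b y

lemma inl_mem_gInterval_inr_inr (hG : G.Connected) {a b : Σ j, L j} (hab : a.1 ≠ b.1) :
    .inl (a.2 : V) ∈ gInterval (glueGraph G L) (.inr a) (.inr b) := by
  have hW := connected_glueGraph (L := L) hG
  have h : (glueGraph G L).dist (.inl a.2) (.inr b) ≤ G.dist a.2 b.2 + 1 := calc
    _ ≤ (glueGraph G L).dist (.inl a.2) (.inl b.2) + (glueGraph G L).dist (.inl b.2) (.inr b) :=
      hW.dist_triangle
    _ = G.dist a.2 b.2 + 1 := by rw [dist_inl_inl hG, dist_inl_inr_self]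
  refine mem_gInterval_of_le hW ?_
  rw [dist_inr_inl_self]
  linarith [dist_inr_inr_ge hG hab]

lemma inr_mem_gInterval_inl_inr (hG : G.Connected) {j : J} {x z : L j} (hxz : G.Adj x z) :
    (.inr ⟨j, x⟩ : V ⊕ Σ j, L j) ∈ gInterval (glueGraph G L) (.inl x) (.inr ⟨j, z⟩) := by
  refine mem_gInterval_of_le (connected_glueGraph hG) ?_
  rw [dist_inl_inr_self (L := L) ⟨j, x⟩, dist_eq_one_iff_adj.mpr (by simpa using hxz), dist_comm]
  simpa [dist_eq_one_iff_adj.mpr hxz.symm] using dist_inr_inl_ge (L := L) hG ⟨j, z⟩ x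

variable {H K : Set (V ⊕ Σ j, L j)}

lemma gConvex_preimage_inl (hG : G.Connected) (hH : GConvex (glueGraph G L) H) :
    GConvex G (Sum.inl ⁻¹' H) :=
  fun _ hx _ hy _ hw => hH _ hx _ hy (inl_mem_gInterval_inl_inl hG hw)

lemma inl_mem_of_inr_mem (hG : G.Connected) (hH : GConvex (glueGraph G L) H)
    (hH₀ : (Sum.inl ⁻¹' H).Nonempty) {b : Σ j, L j} (hb : .inr b ∈ H) : .inl (b.2 : V) ∈ H :=
  let ⟨_, hy⟩ := hH₀
  hH _ hb _ hy (inl_mem_gInterval_inr_inl hG b _)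

lemma fst_eq_of_inr_mem (hG : G.Connected) (hH : GConvex (glueGraph G L) H)
    (hH₀ : Sum.inl ⁻¹' H = ∅) {a b : Σ j, L j} (ha : .inr a ∈ H) (hb : .inr b ∈ H) :
    a.1 = b.1 := by
  by_contra hab
  exact (Set.eq_empty_iff_forall_notMem.mp hH₀) _
    (hH _ ha _ hb (inl_mem_gInterval_inr_inr hG hab))

/-- Along a path in `L j` leaving `H`, the first exit `x → z` would put `inr x` on a geodesic from
`inl x` to `inr z`, whose endpoints lie in `Hᶜ`. -/
lemma inr_mem_of_inr_mem (hG : G.Connected) {j : J} (hL : (G.induce (L j)).Preconnected)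
    (hH : GConvex (glueGraph G L) Hᶜ) (hH₀ : Sum.inl ⁻¹' H = ∅) {x : L j}
    (hx : .inr ⟨j, x⟩ ∈ H) (z : L j) : .inr ⟨j, z⟩ ∈ H := by
  by_contra hz
  obtain ⟨p⟩ := hL x z
  obtain ⟨d, -, hd, hd'⟩ :=
    p.exists_boundary_dart {y | (.inr ⟨j, y⟩ : V ⊕ Σ j, L j) ∈ H} hx hz
  have hbase : .inl (d.fst : V) ∈ Hᶜ := (Set.eq_empty_iff_forall_notMem.mp hH₀) _
  exact hH _ hbase _ hd' (inr_mem_gInterval_inl_inr hG (comap_adj.mp d.adj)) hd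

lemma not_crossing_of_preimage_inl_eq_empty (hG : G.Connected)
    (hL : ∀ j, (G.induce (L j)).Preconnected) (hH : GConvex (glueGraph G L) H)
    (hK : GConvex (glueGraph G L) Kᶜ) (hH₀ : Sum.inl ⁻¹' H = ∅) (hK₀ : Sum.inl ⁻¹' K = ∅) :
    ¬ Crossing H K := by
  rintro ⟨⟨w, hwH, hwK⟩, ⟨w', hw'H, hw'K⟩, -⟩
  obtain (x | ⟨j, x⟩) := w
  · exact (Set.eq_empty_iff_forall_notMem.mp hH₀) x hwH
  obtain (x' | ⟨j', x'⟩) := w'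
  · exact (Set.eq_empty_iff_forall_notMem.mp hH₀) x' hw'H
  obtain rfl : j = j' := fst_eq_of_inr_mem hG hH hH₀ hwH hw'H
  exact hw'K (inr_mem_of_inr_mem hG (hL j) hK hK₀ hwK x')

lemma preimage_inl_eq_empty_or_eq_univ (hG : G.Connected)
    (hH : IsHalfspace (glueGraph G L) H) (hH' : ¬ IsHalfspace G (Sum.inl ⁻¹' H)) :
    Sum.inl ⁻¹' H = ∅ ∨ Sum.inl ⁻¹' H = Set.univ := by
  by_contra h
  rw [not_or, ← Ne, ← Ne, ← Set.nonempty_iff_ne_empty, ← Set.nonempty_compl] at h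
  exact hH' ⟨h.1, h.2, gConvex_preimage_inl hG hH.2.2.1, gConvex_preimage_inl hG hH.2.2.2⟩

lemma not_crossing_of_not_isHalfspace_preimage_inl (hG : G.Connected)
    (hL : ∀ j, (G.induce (L j)).Preconnected) (hH : IsHalfspace (glueGraph G L) H)
    (hK : IsHalfspace (glueGraph G L) K) (hH' : ¬ IsHalfspace G (Sum.inl ⁻¹' H))
    (hK' : ¬ IsHalfspace G (Sum.inl ⁻¹' K)) : ¬ Crossing H K := by
  have key : ∀ H : Set (V ⊕ Σ j, L j), IsHalfspace (glueGraph G L) H →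
      Sum.inl ⁻¹' H = ∅ → ¬ Crossing H K := by
    intro H hH hH₀
    rcases preimage_inl_eq_empty_or_eq_univ hG hK hK' with hK₀ | hK₀
    · exact not_crossing_of_preimage_inl_eq_empty hG hL hH.2.2.1 hK.2.2.2 hH₀ hK₀
    · refine fun h => not_crossing_of_preimage_inl_eq_empty hG hL hH.2.2.1
        (by rw [compl_compl]; exact hK.2.2.1) hH₀ ?_ h.compl_right
      rw [Set.preimage_compl, hK₀, Set.compl_univ]
  rcases preimage_inl_eq_empty_or_eq_univ hG hH hH' with hH₀ | hH₀
  · exact key H hH hH₀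
  · refine fun h => key Hᶜ hH.compl ?_ h.compl_left
    rw [Set.preimage_compl, hH₀, Set.compl_univ]

lemma inter_preimage_inl_nonempty (hG : G.Connected) (hH : GConvex (glueGraph G L) H)
    (hK : GConvex (glueGraph G L) K) (hH₀ : (Sum.inl ⁻¹' H).Nonempty)
    (hK₀ : (Sum.inl ⁻¹' K).Nonempty) (hHK : (H ∩ K).Nonempty) :
    (Sum.inl ⁻¹' H ∩ Sum.inl ⁻¹' K).Nonempty := by
  obtain ⟨x | b, hxH, hxK⟩ := hHK
  · exact ⟨x, hxH, hxK⟩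
  · exact ⟨b.2, inl_mem_of_inr_mem hG hH hH₀ hxH, inl_mem_of_inr_mem hG hK hK₀ hxK⟩

lemma crossing_preimage_inl (hG : G.Connected) (hH : IsHalfspace (glueGraph G L) H)
    (hK : IsHalfspace (glueGraph G L) K) (hH' : IsHalfspace G (Sum.inl ⁻¹' H))
    (hK' : IsHalfspace G (Sum.inl ⁻¹' K)) (hHK : Crossing H K) :
    Crossing (Sum.inl ⁻¹' H) (Sum.inl ⁻¹' K) :=
  ⟨inter_preimage_inl_nonempty hG hH.2.2.1 hK.2.2.1 hH'.1 hK'.1 hHK.1,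
    inter_preimage_inl_nonempty hG hH.2.2.1 hK.2.2.2 hH'.1 hK'.2.1 hHK.2.1,
    inter_preimage_inl_nonempty hG hH.2.2.2 hK.2.2.1 hH'.2.1 hK'.1 hHK.2.2.1,
    inter_preimage_inl_nonempty hG hH.2.2.2 hK.2.2.2 hH'.2.1 hK'.2.1 hHK.2.2.2⟩

end glueGraph

variable (G) in
open Classical in
noncomputable def glueColoring (Φ : Set V → ℕ) (m : ℕ)
    (H : Set (V ⊕ Σ j, L j)) : ℕ :=
  if IsHalfspace G (Sum.inl ⁻¹' H) then Φ (Sum.inl ⁻¹' H) else m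

lemma IsHyperplaneColoring.glue (hG : G.Connected)
    (hL : ∀ j, (G.induce (L j)).Preconnected) {m : ℕ} {Φ : Set V → ℕ}
    (hΦ : IsHyperplaneColoring G m Φ) :
    IsHyperplaneColoring (glueGraph G L) (m + 1) (glueColoring G Φ m) := by
  refine ⟨fun H _ => ?_, fun H K hH hK hHK => ?_⟩
  · unfold glueColoring
    rw [Set.preimage_compl, isHalfspace_compl_iff]
    split_ifs with h
    · exact ⟨(hΦ.1 _ h).1.trans (Nat.lt_succ_self m), (hΦ.1 _ h).2⟩
    · exact ⟨Nat.lt_succ_self m, rfl⟩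
  · unfold glueColoring
    split_ifs with hH' hK' hK'
    · exact hΦ.2 _ _ hH' hK' (glueGraph.crossing_preimage_inl hG hH hK hH' hK' hHK)
    · exact (hΦ.1 _ hH').1.ne
    · exact (hΦ.1 _ hK').1.ne'
    · exact absurd hHK
        (glueGraph.not_crossing_of_not_isHalfspace_preimage_inl hG hL hH hK hH' hK')

end Glue

lemma Collapsible.connected {V : Type} {G : SimpleGraph V} {m : ℕ} (h : Collapsible G m) :
    G.Connected := by
  induction h with
  | point G v hv =>
    exact (connected_iff_exists_forall_reachable G).mpr ⟨v, fun w => hv w ▸ .rfl⟩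
  | glue _ L _ G' e ih => exact e.connected_iff.mpr (connected_glueGraph ih)

/-- If a cube complex admits a (regular) decomposition of length `m`, then its
hyperplanes are `m`-colorable: crossing hyperplanes get different colors, where a
hyperplane is encoded by its pair of complementary halfspaces. -/
theorem collapsible_hyperplanes_colorable {V : Type} (G : SimpleGraph V) (m : ℕ)
    (h : Collapsible G m) :
    ∃ Φ : Set V → ℕ,
      (∀ H, IsHalfspace G H → Φ H < m ∧ Φ Hᶜ = Φ H) ∧
      ∀ H K, IsHalfspace G H → IsHalfspace G K → Crossing H K → Φ H ≠ Φ K := by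
  induction h with
  | point G v hv =>
    have : Subsingleton _ := ⟨fun a b => (hv a).trans (hv b).symm⟩
    exact ⟨fun _ => 0, IsHyperplaneColoring.of_subsingleton G 0 _⟩
  | glue hG L hL G' e ih =>
    obtain ⟨Φ, hΦ⟩ := ih
    exact ⟨_, (IsHyperplaneColoring.glue hG.connected (fun j => (hL j).2.preconnected)
      hΦ).comp_preimage_iso e.symm⟩
end
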